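/- The nuclear norm satisfies the triangle inequality: for any two real matrices A and B of the same size, ‖A + B‖_* ≤ ‖A‖_* + ‖B‖_*. -/

import Mathlib

/-!
Duality. Call a finite family `u` Bessel if `∑ i, ⟪u i, x⟫² ≤ ‖x‖²` for all `x`. If `b` is an
orthonormal eigenbasis of `MᵀM` with eigenvalues `λ`, the vectors `M b j` are pairwise orthogonal
with `‖M b j‖ = √λ j`, so `‖M‖_* = ∑ j, ‖M b j‖`. Expanding each `w i` in the basis `b` and
applying Cauchy–Schwarz gives `∑ i, ⟪u i, M w i⟫ ≤ ‖M‖_*` for all Bessel families `u` and `w`.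
For `M = A + B` this bound is attained by `w = b` and `u j = ‖M b j‖⁻¹ • M b j` (which is `0`
when `M b j = 0`, as `0⁻¹ = 0`), and splitting `⟪u j, (A + B) b j⟫` into its `A` and `B` parts
yields the triangle inequality.
-/

theorem Matrix.isHermitian_transpose_mul_self {m n α : Type*} [Fintype m]
    [NonUnitalCommSemiring α] [StarRing α] [TrivialStar α] (A : Matrix m n α) :
    (A.transpose * A).IsHermitian := by
  simpa [Matrix.conjTranspose_eq_transpose_of_trivial] using
    Matrix.isHermitian_conjTranspose_mul_self A

/-- The nuclear norm of a real matrix `A`: the sum of its singular values, i.e. the sum of the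
square roots of the eigenvalues of the positive semidefinite symmetric matrix `Aᵀ * A`. -/
noncomputable def nuclearNorm {m n : Type*} [Fintype m] [Fintype n] [DecidableEq n]
    (A : Matrix m n ℝ) : ℝ :=
  ∑ i, Real.sqrt ((Matrix.isHermitian_transpose_mul_self A).eigenvalues i)

open Finset Matrix

section Bessel

variable {ι E F : Type*} [Fintype ι] [NormedAddCommGroup E] [InnerProductSpace ℝ E]
  [NormedAddCommGroup F] [InnerProductSpace ℝ F]

def IsBesselFamily (u : ι → E) : Prop :=
  ∀ x, ∑ i, inner ℝ (u i) x ^ 2 ≤ ‖x‖ ^ 2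

theorem Orthonormal.isBesselFamily {u : ι → E} (hu : Orthonormal ℝ u) : IsBesselFamily u := by
  intro x
  simpa only [Real.norm_eq_abs, sq_abs] using hu.sum_inner_products_le x (s := univ)

theorem isBesselFamily_of_pairwise_inner_eq_zero {u : ι → E}
    (horth : Pairwise fun i j => inner ℝ (u i) (u j) = 0) (hle : ∀ i, ‖u i‖ ≤ 1) :
    IsBesselFamily u := by
  intro x
  set p := ∑ i, inner ℝ (u i) x • u i
  have hpx : inner ℝ p x = ∑ i, inner ℝ (u i) x ^ 2 := by
    simp only [p, sum_inner, real_inner_smul_left, sq]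
  have hpp : ‖p‖ ^ 2 ≤ ∑ i, inner ℝ (u i) x ^ 2 := by
    have pythagoras : ‖p‖ ^ 2 = ∑ i, inner ℝ (u i) x ^ 2 * ‖u i‖ ^ 2 := by
      rw [← real_inner_self_eq_norm_sq]
      simp only [p, sum_inner, inner_sum, real_inner_smul_left, real_inner_smul_right]
      refine sum_congr rfl fun i _ => ?_
      rw [sum_eq_single i (fun j _ hji => by rw [horth hji]; ring) (by simp),
        real_inner_self_eq_norm_sq]
      ring
    rw [pythagoras]
    gcongr with i
    exact mul_le_of_le_one_right (sq_nonneg _) (pow_le_one₀ (norm_nonneg _) (hle i))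
  nlinarith [norm_sub_sq_real x p, sq_nonneg ‖x - p‖, real_inner_comm x p]

theorem isBesselFamily_inv_norm_smul {v : ι → E}
    (horth : Pairwise fun i j => inner ℝ (v i) (v j) = 0) :
    IsBesselFamily fun i => ‖v i‖⁻¹ • v i := by
  refine isBesselFamily_of_pairwise_inner_eq_zero (fun i j hij => ?_) fun i => ?_
  · simp only [real_inner_smul_left, real_inner_smul_right, horth hij, mul_zero]
  · rcases eq_or_ne (v i) 0 with h | h
    · simp [h]
    · exact (norm_smul_inv_norm h).le

theorem IsBesselFamily.sum_inner_mul_inner_le {u : ι → E} {w : ι → F} (hu : IsBesselFamily u)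
    (hw : IsBesselFamily w) (y : E) (z : F) :
    ∑ i, inner ℝ (u i) y * inner ℝ (w i) z ≤ ‖y‖ * ‖z‖ :=
  calc ∑ i, inner ℝ (u i) y * inner ℝ (w i) z
      ≤ √(∑ i, inner ℝ (u i) y ^ 2) * √(∑ i, inner ℝ (w i) z ^ 2) :=
        Real.sum_mul_le_sqrt_mul_sqrt _ _ _
    _ ≤ √(‖y‖ ^ 2) * √(‖z‖ ^ 2) := by gcongr <;> [exact hu y; exact hw z]
    _ = ‖y‖ * ‖z‖ := by rw [Real.sqrt_sq (norm_nonneg _), Real.sqrt_sq (norm_nonneg _)]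

theorem sum_inner_apply_le_sum_norm_apply {κ : Type*} [Fintype κ] {u : ι → F} {w : ι → E}
    (hu : IsBesselFamily u) (hw : IsBesselFamily w) (T : E →ₗ[ℝ] F)
    (b : OrthonormalBasis κ ℝ E) :
    ∑ i, inner ℝ (u i) (T (w i)) ≤ ∑ j, ‖T (b j)‖ := by
  have expand : ∀ i, inner ℝ (u i) (T (w i)) =
      ∑ j, inner ℝ (u i) (T (b j)) * inner ℝ (w i) (b j) := fun i => by
    conv_lhs => rw [← b.sum_repr' (w i)]
    simp only [map_sum, map_smul, inner_sum, real_inner_smul_right, real_inner_comm (w i)]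
    exact sum_congr rfl fun j _ => mul_comm _ _
  calc ∑ i, inner ℝ (u i) (T (w i))
      = ∑ j, ∑ i, inner ℝ (u i) (T (b j)) * inner ℝ (w i) (b j) := by
        simp only [expand]
        exact sum_comm
    _ ≤ ∑ j, ‖T (b j)‖ * ‖b j‖ := sum_le_sum fun j _ => hu.sum_inner_mul_inner_le hw _ _
    _ = ∑ j, ‖T (b j)‖ := by simp only [b.orthonormal.1, mul_one]

theorem real_inner_inv_norm_smul_self (v : E) : inner ℝ (‖v‖⁻¹ • v) v = ‖v‖ := by
  rw [real_inner_smul_left, real_inner_self_eq_norm_sq]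
  rcases eq_or_ne ‖v‖ 0 with h | h
  · simp [h]
  · field_simp

end Bessel

theorem Matrix.IsHermitian.toEuclideanLin_eigenvectorBasis {𝕜 n : Type*} [RCLike 𝕜] [Fintype n]
    [DecidableEq n] {A : Matrix n n 𝕜} (hA : A.IsHermitian) (j : n) :
    toEuclideanLin A (hA.eigenvectorBasis j) = hA.eigenvalues j • hA.eigenvectorBasis j := by
  rw [toLpLin_apply, hA.mulVec_eigenvectorBasis]
  rfl

section NuclearNorm

variable {m n : Type*} [Fintype m] [Fintype n] [DecidableEq n]

theorem Matrix.inner_toEuclideanLin_toEuclideanLin (M : Matrix m n ℝ)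
    (x y : EuclideanSpace ℝ n) :
    inner ℝ (toEuclideanLin M x) (toEuclideanLin M y) =
      inner ℝ x (toEuclideanLin (Mᵀ * M) y) := by
  simp only [EuclideanSpace.inner_eq_star_dotProduct, toLpLin_apply, star_trivial]
  rw [← mulVec_mulVec, dotProduct_mulVec, mulVec_transpose]

theorem Matrix.inner_toEuclideanLin_eigenvectorBasis (M : Matrix m n ℝ) (i j : n) :
    inner ℝ (toEuclideanLin M ((isHermitian_transpose_mul_self M).eigenvectorBasis i))
        (toEuclideanLin M ((isHermitian_transpose_mul_self M).eigenvectorBasis j)) =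
      if i = j then (isHermitian_transpose_mul_self M).eigenvalues j else 0 := by
  rw [inner_toEuclideanLin_toEuclideanLin, IsHermitian.toEuclideanLin_eigenvectorBasis,
    real_inner_smul_right,
    orthonormal_iff_ite.1 (isHermitian_transpose_mul_self M).eigenvectorBasis.orthonormal]
  split_ifs <;> simp

theorem nuclearNorm_eq_sum_norm_toEuclideanLin_eigenvectorBasis (M : Matrix m n ℝ) :
    nuclearNorm M =
      ∑ j, ‖toEuclideanLin M ((isHermitian_transpose_mul_self M).eigenvectorBasis j)‖ := by
  refine sum_congr rfl fun j _ => ?_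
  rw [norm_eq_sqrt_real_inner, inner_toEuclideanLin_eigenvectorBasis, if_pos rfl]

theorem sum_inner_toEuclideanLin_le_nuclearNorm {ι : Type*} [Fintype ι] (M : Matrix m n ℝ)
    {u : ι → EuclideanSpace ℝ m} {w : ι → EuclideanSpace ℝ n} (hu : IsBesselFamily u)
    (hw : IsBesselFamily w) :
    ∑ i, inner ℝ (u i) (toEuclideanLin M (w i)) ≤ nuclearNorm M := by
  rw [nuclearNorm_eq_sum_norm_toEuclideanLin_eigenvectorBasis]
  exact sum_inner_apply_le_sum_norm_apply hu hw _ _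

end NuclearNorm

/-- The nuclear norm satisfies the triangle inequality:
`‖A + B‖_* ≤ ‖A‖_* + ‖B‖_*` for real matrices of the same size. -/
theorem nuclearNorm_add_le {m n : Type*} [Fintype m] [Fintype n] [DecidableEq n]
    (A B : Matrix m n ℝ) :
    nuclearNorm (A + B) ≤ nuclearNorm A + nuclearNorm B := by
  set b := (isHermitian_transpose_mul_self (A + B)).eigenvectorBasis
  set v := fun j => toEuclideanLin (A + B) (b j)
  have hu : IsBesselFamily fun j => ‖v j‖⁻¹ • v j :=
    isBesselFamily_inv_norm_smul fun i j hij => by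
      simp only [v, b, inner_toEuclideanLin_eigenvectorBasis, if_neg hij]
  have hw : IsBesselFamily b := b.orthonormal.isBesselFamily
  calc nuclearNorm (A + B) = ∑ j, inner ℝ (‖v j‖⁻¹ • v j) (v j) := by
        simp only [real_inner_inv_norm_smul_self]
        exact nuclearNorm_eq_sum_norm_toEuclideanLin_eigenvectorBasis _
    _ = ∑ j, inner ℝ (‖v j‖⁻¹ • v j) (toEuclideanLin A (b j)) +
          ∑ j, inner ℝ (‖v j‖⁻¹ • v j) (toEuclideanLin B (b j)) := by
        simp only [v, map_add, LinearMap.add_apply, inner_add_right, sum_add_distrib]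
    _ ≤ nuclearNorm A + nuclearNorm B :=
        add_le_add (sum_inner_toEuclideanLin_le_nuclearNorm A hu hw)
          (sum_inner_toEuclideanLin_le_nuclearNorm B hu hw)
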